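/- The maps P_ε realize a contraction of the extended affine group to the Heisenberg group: for all g, h ∈ ℝ³, lim_{ε→0⁺} P_ε⁻¹(P_ε(g) ∘ P_ε(h)) = g ∘₀ h, the limit taken componentwise in ℝ³. -/

import Mathlib

open MeasureTheory Filter Topology

/-- The Heisenberg group product on `ℝ³`. -/
noncomputable def mulH (g h : ℝ × ℝ × ℝ) : ℝ × ℝ × ℝ :=
  (g.1 + h.1, g.2.1 + h.2.1 + g.1 * h.2.2, g.2.2 + h.2.2)

/-- The extended affine group product (on the chart `ℝ³ ⊇ (0,∞) × ℝ × ℝ`). -/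
noncomputable def mulEA (g h : ℝ × ℝ × ℝ) : ℝ × ℝ × ℝ :=
  (g.1 * h.1, g.1 * h.2.1 + g.2.1, g.2.2 + h.2.2)

/-- The contraction maps `P_ε : H → EA`. -/
noncomputable def Pmap (ε : ℝ) (g : ℝ × ℝ × ℝ) : ℝ × ℝ × ℝ :=
  if g.1 = 0 then (1, g.2.2, g.2.2 + ε * g.2.1)
  else (Real.exp (-(ε * g.1)), g.2.2 * (Real.exp (-(ε * g.1)) - 1) / (-(ε * g.1)),
    g.2.2 + ε * (g.2.1 - g.1 * g.2.2 / 2))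

/-- The inverse maps `P_ε⁻¹ : EA → H`. -/
noncomputable def Pinv (ε : ℝ) (g : ℝ × ℝ × ℝ) : ℝ × ℝ × ℝ :=
  if g.1 = 1 then (0, (g.2.2 - g.2.1) / ε, g.2.1)
  else (-(Real.log g.1) / ε,
    (g.2.2 - g.2.1 * Real.log g.1 / (g.1 - 1) - g.2.1 * (Real.log g.1) ^ 2 / (2 * (g.1 - 1))) / ε,
    g.2.1 * Real.log g.1 / (g.1 - 1))

/-!
Writing `φ(t) = (1 - e^{-t})/t` and `δ(t) = (1 - φ(t))/t`, both continuous through `t = 0` with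
`φ(0) = 1`, `δ(0) = 1/2` (second-order Taylor expansion of `exp`), one has
`P_ε(x, y, z) = (e^{-εx}, z φ(εx), z + ε(y - xz/2))` and
`P_ε⁻¹(e^{-c}, β, γ) = (c/ε, (γ - β(1 - c/2)/φ(c))/ε, β/φ(c))`. Substituting
`e^{-a} = 1 - aφ(a)` and `φ(a) = 1 - aδ(a)` into `P_ε⁻¹(P_ε g ∘ P_ε h)`, the numerator of the middle
coordinate becomes divisible by `ε`, leaving an expression continuous in `ε` whose value at `ε = 0`
is the Heisenberg product.
-/

open Real in
theorem Real.tendsto_exp_sub_sum_range_div_pow (n : ℕ) :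
    Tendsto (fun x => (exp x - ∑ i ∈ Finset.range n, x ^ i / i.factorial) / x ^ n)
      (𝓝[≠] 0) (𝓝 (1 / n.factorial)) := by
  have h := ((exp_sub_sum_range_succ_isLittleO_pow n).tendsto_div_nhds_zero.mono_left
    (nhdsWithin_le_nhds (s := {0}ᶜ))).add_const (1 / (n.factorial : ℝ))
  rw [zero_add] at h
  refine h.congr' (eventually_mem_nhdsWithin.mono fun x (hx : x ≠ 0) => ?_)
  rw [Finset.sum_range_succ]
  field_simp
  ring

theorem continuous_dslope {𝕜 E : Type*} [NontriviallyNormedField 𝕜] [NormedAddCommGroup E]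
    [NormedSpace 𝕜 E] {f : 𝕜 → E} {a : 𝕜} (hf : Continuous f) (ha : DifferentiableAt 𝕜 f a) :
    Continuous (dslope f a) := by
  refine continuous_iff_continuousAt.2 fun b => ?_
  rcases eq_or_ne b a with rfl | hb
  · exact continuousAt_dslope_same.2 ha
  · exact (continuousAt_dslope_of_ne hb).2 hf.continuousAt

theorem tendsto_neg_nhdsNE_zero {G : Type*} [TopologicalSpace G] [AddGroup G] [ContinuousNeg G] :
    Tendsto (fun t : G => -t) (𝓝[≠] 0) (𝓝[≠] 0) :=
  tendsto_nhdsWithin_iff.2 ⟨(continuous_neg.tendsto' 0 0 neg_zero).mono_left nhdsWithin_le_nhds,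
    eventually_mem_nhdsWithin.mono fun _ ht => neg_ne_zero.2 ht⟩

/-- `expNegQuot t = (1 - exp (-t)) / t` and `expNegQuot₂ t = (exp (-t) - 1 + t) / t ^ 2`, extended
continuously to `t = 0`: thus `exp (-t) = 1 - t * expNegQuot t = 1 - t + t ^ 2 * expNegQuot₂ t`. -/
noncomputable def expNegQuot : ℝ → ℝ := dslope (fun t => -Real.exp (-t)) 0

noncomputable def expNegQuot₂ : ℝ → ℝ := dslope (fun t => -expNegQuot t) 0

theorem hasDerivAt_neg_exp_neg (t : ℝ) :
    HasDerivAt (fun t => -Real.exp (-t)) (Real.exp (-t)) t := by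
  simpa using (hasDerivAt_neg t).exp.fun_neg

theorem mul_expNegQuot (t : ℝ) : t * expNegQuot t = 1 - Real.exp (-t) := by
  have := sub_smul_dslope (fun t => -Real.exp (-t)) 0 t
  simp only [sub_zero, smul_eq_mul, neg_zero, Real.exp_zero] at this
  rw [expNegQuot, this]; ring

theorem expNegQuot_zero : expNegQuot 0 = 1 := by
  simp [expNegQuot, dslope_same, (hasDerivAt_neg_exp_neg 0).deriv]

theorem expNegQuot_ne_zero (t : ℝ) : expNegQuot t ≠ 0 := by
  intro h
  have h1 : Real.exp (-t) = 1 := by linarith [h ▸ mul_expNegQuot t]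
  have ht : t = 0 := by simpa using h1
  simp [ht, expNegQuot_zero] at h

@[fun_prop]
theorem continuous_expNegQuot : Continuous expNegQuot :=
  continuous_dslope (by fun_prop) (hasDerivAt_neg_exp_neg 0).differentiableAt

theorem hasDerivAt_expNegQuot_zero : HasDerivAt expNegQuot (-1 / 2) 0 := by
  rw [hasDerivAt_iff_tendsto_slope]
  have h := ((Real.tendsto_exp_sub_sum_range_div_pow 2).comp tendsto_neg_nhdsNE_zero).neg
  refine (by norm_num : -(1 / (Nat.factorial 2 : ℝ)) = -1 / 2) ▸
    h.congr' (eventually_mem_nhdsWithin.mono fun t (ht : t ≠ 0) => ?_)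
  have hsum : ∑ i ∈ Finset.range 2, (-t) ^ i / i.factorial = 1 - t := by
    simp [Finset.sum_range_succ, sub_eq_add_neg]
  have := mul_expNegQuot t
  rw [Function.comp_apply, hsum, slope_def_field, expNegQuot_zero]
  field_simp
  linear_combination -t * this

theorem mul_expNegQuot₂ (t : ℝ) : t * expNegQuot₂ t = 1 - expNegQuot t := by
  have := sub_smul_dslope (fun t => -expNegQuot t) 0 t
  simp only [sub_zero, smul_eq_mul, expNegQuot_zero] at this
  rw [expNegQuot₂, this]; ring

theorem expNegQuot₂_zero : expNegQuot₂ 0 = 1 / 2 := by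
  norm_num [expNegQuot₂, dslope_same, hasDerivAt_expNegQuot_zero.deriv]

@[fun_prop]
theorem continuous_expNegQuot₂ : Continuous expNegQuot₂ :=
  continuous_dslope continuous_expNegQuot.neg hasDerivAt_expNegQuot_zero.neg.differentiableAt

theorem Pmap_eq {ε : ℝ} (hε : ε ≠ 0) (g : ℝ × ℝ × ℝ) :
    Pmap ε g = (Real.exp (-(ε * g.1)), g.2.2 * expNegQuot (ε * g.1),
      g.2.2 + ε * (g.2.1 - g.1 * g.2.2 / 2)) := by
  rw [Pmap]
  split_ifs with hg
  · simp [hg, expNegQuot_zero]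
  · have ht : ε * g.1 ≠ 0 := mul_ne_zero hε hg
    have := mul_expNegQuot (ε * g.1)
    simp only [Prod.mk.injEq, true_and, and_true]
    field_simp
    linear_combination (-g.2.2) * this

theorem Pinv_exp_neg (ε c β γ : ℝ) :
    Pinv ε (Real.exp (-c), β, γ) =
      (c / ε, (γ - β * (1 - c / 2) / expNegQuot c) / ε, β / expNegQuot c) := by
  rw [Pinv]
  split_ifs with hc
  · obtain rfl : c = 0 := by simpa using hc
    simp [expNegQuot_zero]
  · have hφ := expNegQuot_ne_zero c
    have hE : Real.exp (-c) - 1 = -(c * expNegQuot c) := by linear_combination mul_expNegQuot c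
    have hc0 : c ≠ 0 := by rintro rfl; simp at hc
    dsimp only
    rw [Real.log_exp, hE]
    simp only [Prod.mk.injEq]
    refine ⟨by ring, ?_, ?_⟩
    · field_simp
      ring
    · field_simp

/-- `P_ε⁻¹ (P_ε g ∘ P_ε h)` for `ε ≠ 0`, with every division by `ε` carried out, so that it
extends continuously to `ε = 0`. -/
noncomputable def deformedMul (ε : ℝ) : ℝ × ℝ × ℝ → ℝ × ℝ × ℝ → ℝ × ℝ × ℝ
  | (x, y, z), (x', y', z') =>
    let β := Real.exp (-(ε * x)) * z' * expNegQuot (ε * x') + z * expNegQuot (ε * x)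
    (x + x',
      y + y' - x * z / 2 - x' * z' / 2 +
        (z' * (x * expNegQuot (ε * x) + Real.exp (-(ε * x)) * x' * expNegQuot₂ (ε * x'))
          + z * x * expNegQuot₂ (ε * x) - (x + x') * (z + z') * expNegQuot₂ (ε * (x + x'))
          + β * (x + x') / 2) / expNegQuot (ε * (x + x')),
      β / expNegQuot (ε * (x + x')))

theorem deformedMul_zero (g h : ℝ × ℝ × ℝ) : deformedMul 0 g h = mulH g h := by
  obtain ⟨x, y, z⟩ := g
  obtain ⟨x', y', z'⟩ := h
  simp only [deformedMul, mulH, zero_mul, neg_zero, Real.exp_zero, expNegQuot_zero,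
    expNegQuot₂_zero, Prod.mk.injEq]
  exact ⟨trivial, by ring, by ring⟩

theorem continuous_deformedMul (g h : ℝ × ℝ × ℝ) : Continuous fun ε => deformedMul ε g h := by
  obtain ⟨x, y, z⟩ := g
  obtain ⟨x', y', z'⟩ := h
  simp only [deformedMul]
  fun_prop (disch := intro; exact expNegQuot_ne_zero _)

theorem Pinv_mulEA_Pmap {ε : ℝ} (hε : ε ≠ 0) (g h : ℝ × ℝ × ℝ) :
    Pinv ε (mulEA (Pmap ε g) (Pmap ε h)) = deformedMul ε g h := by
  obtain ⟨x, y, z⟩ := g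
  obtain ⟨x', y', z'⟩ := h
  have hE : Real.exp (-(ε * x)) * Real.exp (-(ε * x')) = Real.exp (-(ε * (x + x'))) := by
    rw [← Real.exp_add]; ring_nf
  rw [Pmap_eq hε, Pmap_eq hε, mulEA]
  dsimp only
  rw [hE, Pinv_exp_neg, deformedMul]
  have hφ := expNegQuot_ne_zero (ε * (x + x'))
  simp only [Prod.mk.injEq]
  refine ⟨by field_simp, ?_, by ring⟩
  have h1 := mul_expNegQuot (ε * x)
  have h2 := mul_expNegQuot₂ (ε * x)
  have h3 := mul_expNegQuot₂ (ε * x')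
  have h4 := mul_expNegQuot₂ (ε * (x + x'))
  field_simp
  linear_combination 2 * (z * h4 + z' * h4 - z * h2 - z' * Real.exp (-(ε * x)) * h3 - z' * h1)

theorem contraction_of_extended_affine_to_heisenberg (g h : ℝ × ℝ × ℝ) :
    Filter.Tendsto (fun ε : ℝ => Pinv ε (mulEA (Pmap ε g) (Pmap ε h)))
      (𝓝[>] (0:ℝ)) (𝓝 (mulH g h)) := by
  have hlim : Tendsto (fun ε => deformedMul ε g h) (𝓝[>] 0) (𝓝 (mulH g h)) :=
    deformedMul_zero g h ▸ ((continuous_deformedMul g h).tendsto 0).mono_left nhdsWithin_le_nhds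
  refine hlim.congr' (eventually_mem_nhdsWithin.mono fun ε (hε : 0 < ε) => ?_)
  exact (Pinv_mulEA_Pmap hε.ne' g h).symm
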